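/- arXiv:2307.03086 — 3 statements merged into one kernel-verified Lean document; each statement's English description precedes it below -/
import Mathlib

section
/- For every nonzero complex number m and every positive integer n, the sum over k from 1 to n of ((256m-27)k^3 - 384m k^2 + (176m+3)k - 24m) / (k(3k-1) * m^k * binomial(4k, k)) equals 3 - 3(3n+1) / (m^n * binomial(4n, n)). -/
lemma choose_ratio (k : ℕ) :
    ((4*(k+1)).choose (k+1) : ℂ) * ((3*k+3)*(3*k+2)*(3*k+1)) =
    ((4*k).choose k : ℂ) * (8*(4*k+3)*(2*k+1)*(4*k+1)) := by
  have h1 := Nat.choose_mul_factorial_mul_factorial (show k ≤ 4*k by omega)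
  have h2 := Nat.choose_mul_factorial_mul_factorial (show k+1 ≤ 4*(k+1) by omega)
  have e3 : 4*(k+1) - (k+1) = 3*k+3 := by omega
  have e4 : 4*k - k = 3*k := by omega
  rw [e3] at h2
  rw [e4] at h1
  have f1 : ((4*(k+1)).factorial : ℂ) = (4*k+4)*(4*k+3)*(4*k+2)*(4*k+1)*((4*k).factorial) := by
    have : 4*(k+1) = (4*k+3)+1 := by ring
    rw [this, Nat.factorial_succ, show 4*k+3 = (4*k+2)+1 from rfl, Nat.factorial_succ,
      show 4*k+2 = (4*k+1)+1 from rfl, Nat.factorial_succ,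
      show 4*k+1 = (4*k)+1 from rfl, Nat.factorial_succ]
    push_cast; ring
  have f2 : ((3*k+3).factorial : ℂ) = (3*k+3)*(3*k+2)*(3*k+1)*((3*k).factorial) := by
    rw [show 3*k+3 = (3*k+2)+1 from rfl, Nat.factorial_succ,
      show 3*k+2 = (3*k+1)+1 from rfl, Nat.factorial_succ,
      show 3*k+1 = (3*k)+1 from rfl, Nat.factorial_succ]
    push_cast; ring
  have f3 : ((k+1).factorial : ℂ) = (k+1)*(k.factorial) := by
    rw [Nat.factorial_succ]; push_cast; ring
  have e1 : ((4*k).choose k : ℂ) * (k.factorial) * ((3*k).factorial) = ((4*k).factorial) := by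
    exact_mod_cast congrArg (Nat.cast : ℕ → ℂ) h1
  have e2 : ((4*(k+1)).choose (k+1) : ℂ) * ((k+1).factorial) * ((3*k+3).factorial)
      = ((4*(k+1)).factorial) := by
    exact_mod_cast congrArg (Nat.cast : ℕ → ℂ) h2
  rw [f1, f2, f3] at e2
  have hk : ((k:ℂ)+1) ≠ 0 := Nat.cast_add_one_ne_zero k
  have hK : (k.factorial : ℂ) ≠ 0 := Nat.cast_ne_zero.2 k.factorial_ne_zero
  have hT : (((3*k).factorial) : ℂ) ≠ 0 := Nat.cast_ne_zero.2 (3*k).factorial_ne_zero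
  apply mul_left_cancel₀ hk
  apply mul_right_cancel₀ (mul_ne_zero hK hT)

  linear_combination e2 - ((4*(k:ℂ)+4)*(4*k+3)*(4*k+2)*(4*k+1)) * e1

theorem stmt_2 (m : ℂ) (hm : m ≠ 0) (n : ℕ) (hn : 0 < n) :
    ∑ k ∈ Finset.Icc 1 n,
      ((256*m-27)*(k:ℂ)^3 - 384*m*(k:ℂ)^2 + (176*m+3)*(k:ℂ) - 24*m) /
        ((k:ℂ)*(3*(k:ℂ)-1) * m^k * (Nat.choose (4*k) k : ℂ)) =
    3 - 3*(3*(n:ℂ)+1) / (m^n * (Nat.choose (4*n) n : ℂ)) := by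
  induction n, hn using Nat.le_induction with
  | base =>
    simp only [Finset.Icc_self, Finset.sum_singleton]
    norm_num
    field_simp
    ring
  | succ n hn ih =>
    rw [Finset.sum_Icc_succ_top (by omega : 1 ≤ n+1), ih]
    have hb : ((4*(n+1)).choose (n+1) : ℂ) ≠ 0 :=
      Nat.cast_ne_zero.2 (Nat.choose_pos (by omega)).ne'
    have ha : ((4*n).choose n : ℂ) ≠ 0 :=
      Nat.cast_ne_zero.2 (Nat.choose_pos (by omega)).ne'
    have hn1 : ((n:ℂ)+1) ≠ 0 := Nat.cast_add_one_ne_zero n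
    have h32 : (3*(n:ℂ)+2) ≠ 0 := by
      have := Nat.cast_add_one_ne_zero (R := ℂ) (3*n+1)
      push_cast at this
      convert this using 1; ring
    have hmn : m^n ≠ 0 := pow_ne_zero _ hm
    have hr := choose_ratio n
    have h32' : (3*((n:ℂ)+1)-1) ≠ 0 := by
      convert h32 using 1; ring
    push_cast
    field_simp
    linear_combination (-m * m^n) * hr
end

section
/- For every nonnegative integer n, the sum over k from 0 to n of binomial(4k, k) * (2k(11k^2 - 14k + 4) + 22k^2 - 18k + 3) / ((2k-1)(4k-1)(4k-3) * 16^k) equals -binomial(4n, n) / 16^n. -/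
private lemma key (m : ℕ) : (Nat.choose (4*m+4) (m+1) : ℝ) * ((m+1)*(3*m+3)*(3*m+2)*(3*m+1)) =
    (Nat.choose (4*m) m : ℝ) * ((4*m+4)*(4*m+3)*(4*m+2)*(4*m+1)) := by
  have h1 := Nat.add_one_mul_choose_eq (4*m+3) m
  have h2 := Nat.choose_mul_succ_eq (4*m+2) m
  have h3 := Nat.choose_mul_succ_eq (4*m+1) m
  have h4 := Nat.choose_mul_succ_eq (4*m) m
  have e2 : 4*m+2+1-m = 3*m+3 := by omega
  have e3 : 4*m+1+1-m = 3*m+2 := by omega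
  have e4 : 4*m+1-m = 3*m+1 := by omega
  rw [e2] at h2; rw [e3] at h3; rw [e4] at h4
  have c1 : ((4*m+3+1) * Nat.choose (4*m+3) m : ℝ) = (Nat.choose (4*m+4) (m+1) : ℝ) * (m+1) := by
    exact_mod_cast congrArg Nat.cast h1
  have c2 : ((Nat.choose (4*m+2) m : ℝ) * (4*m+2+1)) = (Nat.choose (4*m+3) m : ℝ) * (3*m+3) := by
    exact_mod_cast congrArg Nat.cast h2
  have c3 : ((Nat.choose (4*m+1) m : ℝ) * (4*m+1+1)) = (Nat.choose (4*m+2) m : ℝ) * (3*m+2) := by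
    exact_mod_cast congrArg Nat.cast h3
  have c4 : ((Nat.choose (4*m) m : ℝ) * (4*m+1)) = (Nat.choose (4*m+1) m : ℝ) * (3*m+1) := by
    exact_mod_cast congrArg Nat.cast h4
  linear_combination (-(3*(m:ℝ)+3)*(3*m+2)*(3*m+1)) * c1 - ((4*(m:ℝ)+4)*(3*m+2)*(3*m+1)) * c2 - ((4*(m:ℝ)+4)*(4*m+3)*(3*m+1)) * c3 - ((4*(m:ℝ)+4)*(4*m+3)*(4*m+2)) * c4

theorem stmt_7 (n : ℕ) :
    ∑ k ∈ Finset.range (n+1),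
      (Nat.choose (4*k) k : ℝ) * (2*(k:ℝ)*(11*(k:ℝ)^2 - 14*(k:ℝ) + 4) + 22*(k:ℝ)^2 - 18*(k:ℝ) + 3) /
        ((2*(k:ℝ)-1)*(4*(k:ℝ)-1)*(4*(k:ℝ)-3) * 16^k) =
    -(Nat.choose (4*n) n : ℝ) / 16^n := by
  induction n with
  | zero => norm_num
  | succ n ih =>
    rw [Finset.sum_range_succ, ih]
    have hk := key n
    have h4 : 4*(n+1) = 4*n+4 := by ring
    rw [h4]
    set a : ℝ := (Nat.choose (4*n) n : ℝ) with ha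
    set e : ℝ := (Nat.choose (4*n+4) (n+1) : ℝ) with he
    set x : ℝ := (n:ℝ) with hxdef
    have hx : x + 1 ≠ 0 := by positivity
    have h16 : (16:ℝ)^n ≠ 0 := by positivity
    have hn0 : (0:ℝ) ≤ x := Nat.cast_nonneg n
    have hd1 : (2*(x+1)-1) ≠ 0 := by nlinarith
    have hd2 : (4*(x+1)-1) ≠ 0 := by nlinarith
    have hd3 : (4*(x+1)-3) ≠ 0 := by nlinarith
    have hD : ((2*(x+1)-1)*(4*(x+1)-1)*(4*(x+1)-3)) ≠ 0 := by
      exact mul_ne_zero (mul_ne_zero hd1 hd2) hd3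
    have heq : e * ((2*(x+1)*(11*(x+1)^2 - 14*(x+1) + 4) + 22*(x+1)^2 - 18*(x+1) + 3)
        + (2*(x+1)-1)*(4*(x+1)-1)*(4*(x+1)-3)) = 16*a*((2*(x+1)-1)*(4*(x+1)-1)*(4*(x+1)-3)) := by
      apply mul_left_cancel₀ hx
      linear_combination 2*hk
    have hPD : e * (2*(x+1)*(11*(x+1)^2 - 14*(x+1) + 4) + 22*(x+1)^2 - 18*(x+1) + 3) /
        ((2*(x+1)-1)*(4*(x+1)-1)*(4*(x+1)-3)) = 16*a - e := by
      rw [div_eq_iff hD]; linear_combination heq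
    have hy : ((n+1 : ℕ) : ℝ) = x + 1 := by push_cast; ring
    have hPD' : e * (2*((n+1:ℕ):ℝ)*(11*((n+1:ℕ):ℝ)^2 - 14*((n+1:ℕ):ℝ) + 4) + 22*((n+1:ℕ):ℝ)^2 - 18*((n+1:ℕ):ℝ) + 3) /
        ((2*((n+1:ℕ):ℝ)-1)*(4*((n+1:ℕ):ℝ)-1)*(4*((n+1:ℕ):ℝ)-3)) = 16*a - e := by
      rw [hy]; exact hPD
    rw [← div_div, hPD', pow_succ]
    field_simp
    ring
end

section
/- The infinite series sum over k ≥ 1 of (95k^2 - 84k + 16) * (9/8)^{k-1} / (k(3k-1)(3k-2) * binomial(4k, k)) converges to 2π/√3. -/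
open MeasureTheory intervalIntegral Real

noncomputable def Fn (n : ℕ) (x : ℝ) : ℝ :=
  (9/8:ℝ)^n * ((39/4)*(x^n*(1-x)^(3*n+3)) + (27/4)*(x^(n+2)*(1-x)^(3*n+1))
    + (3/2)*(x^(n+3)*(1-x)^(3*n)))

noncomputable def Rf (x : ℝ) : ℝ := (6-20*x)/(3*x^2+1) + (30-20*x)/(3*x^2-9*x+8)

lemma beta_nat : ∀ (b a : ℕ), ∫ x in (0:ℝ)..1, x^a * (1-x)^b
    = (Nat.factorial a * Nat.factorial b : ℝ) / (Nat.factorial (a+b+1)) := by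
  intro b
  induction b with
  | zero =>
      intro a
      rw [show (a+0+1) = a+1 from rfl, Nat.factorial_succ]
      have ha : ((a:ℝ)+1) ≠ 0 := by positivity
      have hf : ((a.factorial : ℝ)) ≠ 0 := by positivity
      push_cast
      field_simp [integral_pow]
      rw [integral_pow]
      simp [ha]
  | succ b ih =>
      intro a
      have ha : ((a:ℝ)+1) ≠ 0 := by positivity
      have key : ∫ x in (0:ℝ)..1, x^a * (1-x)^(b+1)
          = ((b:ℝ)+1)/((a:ℝ)+1) * ∫ x in (0:ℝ)..1, x^(a+1) * (1-x)^b := by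
        have H := intervalIntegral.integral_mul_deriv_eq_deriv_mul
          (u := fun x : ℝ => (1-x)^(b+1)) (v := fun x : ℝ => x^(a+1)/((a:ℝ)+1))
          (u' := fun x : ℝ => -(((b:ℝ)+1) * (1-x)^b)) (v' := fun x : ℝ => x^a)
          (a := (0:ℝ)) (b := 1)
          (fun x _ => by
            have h1 : HasDerivAt (fun x : ℝ => 1-x) (-1) x := by
              simpa using (hasDerivAt_id x).const_sub 1
            have h2 := h1.fun_pow (b+1)
            convert h2 using 1
            push_cast; ring)
          (fun x _ => by
            have h2 := (hasDerivAt_pow (a+1) x).div_const ((a:ℝ)+1)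
            convert h2 using 1
            push_cast
            field_simp)
          (by apply Continuous.intervalIntegrable; continuity)
          (by apply Continuous.intervalIntegrable; continuity)
        have h10 : ∀ x : ℝ, (1-x)^(b+1) * x^a = x^a * (1-x)^(b+1) := fun x => by ring
        simp only [h10] at H
        have h11 : (fun x : ℝ => -(((b:ℝ)+1) * (1-x)^b) * (x^(a+1)/((a:ℝ)+1)))
            = fun x : ℝ => -(((b:ℝ)+1)/((a:ℝ)+1) * (x^(a+1)*(1-x)^b)) := by
          funext x; ring
        rw [H, h11]
        rw [intervalIntegral.integral_neg, intervalIntegral.integral_const_mul]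
        simp [zero_pow (Nat.succ_ne_zero b)]
      rw [key, ih (a+1)]
      have h1 : (a+1+b+1 : ℕ) = a+(b+1)+1 := by omega
      rw [h1]
      have h2 : ((a+(b+1)+1 : ℕ).factorial : ℝ) ≠ 0 := by positivity
      rw [Nat.factorial_succ a, Nat.factorial_succ b]
      push_cast
      field_simp

lemma term_eq (n : ℕ) :
    (95*((n:ℝ)+1)^2 - 84*((n:ℝ)+1) + 16) * (9/8)^n /
        (((n:ℝ)+1)*(3*((n:ℝ)+1)-1)*(3*((n:ℝ)+1)-2) * (Nat.choose (4*(n+1)) (n+1) : ℝ))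
    = ∫ x in (0:ℝ)..1, Fn n x := by
  have hint : ∀ (c : ℝ) (a b : ℕ), IntervalIntegrable (fun x : ℝ => c*(x^a*(1-x)^b))
      MeasureTheory.volume 0 1 := by
    intro c a b; apply Continuous.intervalIntegrable; continuity
  have expand : ∫ x in (0:ℝ)..1, Fn n x
      = (9/8:ℝ)^n * ((39/4) * ∫ x in (0:ℝ)..1, x^n*(1-x)^(3*n+3))
        + (9/8:ℝ)^n * ((27/4) * ∫ x in (0:ℝ)..1, x^(n+2)*(1-x)^(3*n+1))
        + (9/8:ℝ)^n * ((3/2) * ∫ x in (0:ℝ)..1, x^(n+3)*(1-x)^(3*n)) := by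
    unfold Fn
    rw [intervalIntegral.integral_const_mul]
    rw [intervalIntegral.integral_add ((hint _ _ _).add (hint _ _ _)) (hint _ _ _),
        intervalIntegral.integral_add (hint _ _ _) (hint _ _ _),
        intervalIntegral.integral_const_mul, intervalIntegral.integral_const_mul,
        intervalIntegral.integral_const_mul]
    ring
  rw [expand, beta_nat, beta_nat, beta_nat]
  have e1 : n + (3*n+3) + 1 = 4*n+4 := by omega
  have e2 : (n+2) + (3*n+1) + 1 = 4*n+4 := by omega
  have e3 : (n+3) + 3*n + 1 = 4*n+4 := by omega
  rw [e1, e2, e3]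
  set A := (n.factorial : ℝ) with hA
  set B := ((3*n).factorial : ℝ) with hB
  set C := ((Nat.choose (4*(n+1)) (n+1)) : ℝ) with hC
  have hf1 : ((3*n+3).factorial : ℝ) = (3*(n:ℝ)+3)*(3*(n:ℝ)+2)*(3*(n:ℝ)+1)*B := by
    rw [show 3*n+3 = (3*n+2)+1 from rfl, Nat.factorial_succ,
        show 3*n+2 = (3*n+1)+1 from rfl, Nat.factorial_succ,
        show 3*n+1 = (3*n)+1 from rfl, Nat.factorial_succ]
    push_cast; ring
  have hf2 : ((3*n+1).factorial : ℝ) = (3*(n:ℝ)+1)*B := by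
    rw [show 3*n+1 = (3*n)+1 from rfl, Nat.factorial_succ]; push_cast; ring
  have hf3 : ((n+2).factorial : ℝ) = ((n:ℝ)+2)*((n:ℝ)+1)*A := by
    rw [Nat.factorial_succ, Nat.factorial_succ]; push_cast; ring
  have hf4 : ((n+3).factorial : ℝ) = ((n:ℝ)+3)*((n:ℝ)+2)*((n:ℝ)+1)*A := by
    rw [Nat.factorial_succ, Nat.factorial_succ, Nat.factorial_succ]; push_cast; ring
  have hchoose : ((4*n+4).factorial : ℝ) = C * (((n:ℝ)+1)*A) * ((3*(n:ℝ)+3)*(3*(n:ℝ)+2)*(3*(n:ℝ)+1)*B) := by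
    have h := Nat.choose_mul_factorial_mul_factorial (show n+1 ≤ 4*(n+1) by omega)
    have h2 : 4*(n+1) - (n+1) = 3*n+3 := by omega
    rw [h2] at h
    have h3 : C * ((n+1).factorial : ℝ) * ((3*n+3).factorial : ℝ)
        = ((4*(n+1)).factorial : ℝ) := by rw [hC]; exact_mod_cast h
    rw [show (4*(n+1)) = 4*n+4 from by omega] at h3
    rw [← h3, hf1, Nat.factorial_succ]
    push_cast; ring
  have hA0 : A ≠ 0 := by positivity
  have hB0 : B ≠ 0 := by positivity
  have hC0 : C ≠ 0 := by
    have : 0 < Nat.choose (4*(n+1)) (n+1) := Nat.choose_pos (by omega)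
    positivity
  have hn1 : ((n:ℝ)+1) ≠ 0 := by positivity
  have hn2 : (3*(n:ℝ)+1) ≠ 0 := by positivity
  have hn3 : (3*(n:ℝ)+2) ≠ 0 := by positivity
  have hn4 : (3*(n:ℝ)+3) ≠ 0 := by positivity
  rw [hf1, hf2, hf3, hf4, hchoose]
  rw [show (3*((n:ℝ)+1)-1) = 3*(n:ℝ)+2 from by ring,
      show (3*((n:ℝ)+1)-2) = 3*(n:ℝ)+1 from by ring]
  have h98 : ((9:ℝ)/8)^n ≠ 0 := by positivity
  rw [div_eq_iff (by positivity : ((n:ℝ)+1)*(3*(n:ℝ)+2)*(3*(n:ℝ)+1)*C ≠ 0)]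
  field_simp
  ring

lemma Fn_cont (n : ℕ) : Continuous (Fn n) := by unfold Fn; continuity

lemma Fn_eq (n : ℕ) (x : ℝ) :
    Fn n x = ((39/4)*(1-x)^3 + (27/4)*(x^2*(1-x)) + (3/2)*x^3) * ((9/8)*(x*(1-x)^3))^n := by
  unfold Fn
  rw [mul_pow, mul_pow, pow_add, pow_add, pow_add, pow_mul]
  ring

lemma quad_pos (x : ℝ) : 0 < 3*x^2-9*x+8 := by nlinarith [sq_nonneg (2*x-3)]

lemma u_mem {x : ℝ} (hx : x ∈ Set.Icc (0:ℝ) 1) :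
    0 ≤ (9/8)*(x*(1-x)^3) ∧ (9/8)*(x*(1-x)^3) ≤ 9/32 := by
  obtain ⟨h0, h1⟩ := hx
  constructor
  · have : 0 ≤ 1 - x := by linarith
    positivity
  · nlinarith [sq_nonneg (1-x), sq_nonneg x, sq_nonneg (x*(1-x)), sq_nonneg (2*x-1)]

lemma sum_Fn {x : ℝ} (hx : x ∈ Set.Icc (0:ℝ) 1) : HasSum (fun n => Fn n x) (Rf x) := by
  set u := (9/8)*(x*(1-x)^3) with hu
  obtain ⟨hu0, hu1⟩ := u_mem hx
  have hgeom := (hasSum_geometric_of_lt_one hu0 (by linarith)).mul_left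
    ((39/4)*(1-x)^3 + (27/4)*(x^2*(1-x)) + (3/2)*x^3)
  have heq : (fun n => Fn n x) = fun n =>
      ((39/4)*(1-x)^3 + (27/4)*(x^2*(1-x)) + (3/2)*x^3) * u^n := by
    funext n; exact Fn_eq n x
  rw [heq]
  refine (congrArg (HasSum _) ?_).mpr hgeom
  have hq1 : (3*x^2+1 : ℝ) ≠ 0 := by positivity
  have hq2 : (3*x^2-9*x+8 : ℝ) ≠ 0 := ne_of_gt (quad_pos x)
  have h1u : (1 - u) ≠ 0 := by linarith
  have h1u' : (1 - (9/8)*(x*(1-x)^3) : ℝ) ≠ 0 := h1u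
  unfold Rf
  rw [← div_eq_mul_inv, eq_div_iff h1u']
  rw [div_add_div _ _ hq1 hq2, div_mul_eq_mul_div, div_eq_iff (mul_ne_zero hq1 hq2)]
  ring

noncomputable def Phi (x : ℝ) : ℝ :=
  2*Real.sqrt 3*Real.arctan (Real.sqrt 3*x)
    - (10/3)*Real.log (3*x^2+1) - (10/3)*Real.log (3*x^2-9*x+8)

lemma Phi_deriv (x : ℝ) : HasDerivAt Phi (Rf x) x := by
  have h3 : (Real.sqrt 3)^2 = 3 := Real.sq_sqrt (by norm_num)
  have hq1 : (3*x^2+1 : ℝ) ≠ 0 := by positivity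
  have hq2 : (3*x^2-9*x+8 : ℝ) ≠ 0 := ne_of_gt (quad_pos x)
  have hin : HasDerivAt (fun x : ℝ => Real.sqrt 3 * x) (Real.sqrt 3) x := by
    simpa using (hasDerivAt_id x).const_mul (Real.sqrt 3)
  have h1 : HasDerivAt (fun x : ℝ => 2*Real.sqrt 3*Real.arctan (Real.sqrt 3*x))
      (2*Real.sqrt 3*(1/(1+(Real.sqrt 3*x)^2)*Real.sqrt 3)) x := by
    exact ((Real.hasDerivAt_arctan (Real.sqrt 3*x)).comp x hin).const_mul _
  have hp1 : HasDerivAt (fun x : ℝ => 3*x^2+1) (6*x) x := by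
    have := ((hasDerivAt_pow 2 x).const_mul (3:ℝ)).add_const 1
    simpa using this.congr_deriv (by ring)
  have hp2 : HasDerivAt (fun x : ℝ => 3*x^2-9*x+8) (6*x-9) x := by
    have := (((hasDerivAt_pow 2 x).const_mul (3:ℝ)).sub ((hasDerivAt_id x).const_mul 9)).add_const 8
    simpa using this.congr_deriv (by ring)
  have h2 : HasDerivAt (fun x : ℝ => (10/3)*Real.log (3*x^2+1)) ((10/3)*((6*x)/(3*x^2+1))) x :=
    (hp1.log hq1).const_mul _
  have h4 : HasDerivAt (fun x : ℝ => (10/3)*Real.log (3*x^2-9*x+8)) ((10/3)*((6*x-9)/(3*x^2-9*x+8))) x :=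
    (hp2.log hq2).const_mul _
  have := (h1.sub h2).sub h4
  refine this.congr_deriv ?_
  have h33 : Real.sqrt 3 * Real.sqrt 3 = 3 := Real.mul_self_sqrt (by norm_num)
  have e1 : 2*Real.sqrt 3*(1/(1+(Real.sqrt 3*x)^2)*Real.sqrt 3) = 3*(2/(1+3*x^2)) := by
    rw [mul_pow, h3,
      show 2*Real.sqrt 3*(1/(1+3*x^2)*Real.sqrt 3)
        = (Real.sqrt 3*Real.sqrt 3)*(2/(1+3*x^2)) from by ring, h33]
  rw [e1]
  have hq3 : (1+3*x^2 : ℝ) ≠ 0 := by positivity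
  unfold Rf
  field_simp
  ring

lemma Rf_cont : Continuous Rf := by
  apply Continuous.add
  · exact (by continuity : Continuous fun x : ℝ => 6-20*x).div (by continuity)
      (fun x => by positivity)
  · exact (by continuity : Continuous fun x : ℝ => 30-20*x).div (by continuity)
      (fun x => ne_of_gt (quad_pos x))

lemma Rf_integral : ∫ x in (0:ℝ)..1, Rf x = 2*Real.pi/Real.sqrt 3 := by
  rw [intervalIntegral.integral_eq_sub_of_hasDerivAt (fun x _ => Phi_deriv x)
      (Rf_cont.intervalIntegrable 0 1)]
  have harc : Real.arctan (Real.sqrt 3) = Real.pi/3 := by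
    rw [← Real.tan_pi_div_three]
    exact Real.arctan_tan (by linarith [Real.pi_pos]) (by linarith [Real.pi_pos])
  have h8 : Real.log 8 = Real.log 4 + Real.log 2 := by
    rw [show (8:ℝ) = 4*2 by norm_num, Real.log_mul (by norm_num) (by norm_num)]
  have h3 : Real.sqrt 3 * Real.sqrt 3 = 3 := Real.mul_self_sqrt (by norm_num)
  have hs : Real.sqrt 3 ≠ 0 := by positivity
  unfold Phi
  norm_num
  rw [h8]
  rw [eq_div_iff hs]
  ring_nf
  nlinarith [h3, Real.pi_pos]

lemma Fn_bound {n : ℕ} {x : ℝ} (hx : x ∈ Set.Icc (0:ℝ) 1) :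
    Fn n x ∈ Set.Icc (0:ℝ) (18*(9/32)^n) := by
  obtain ⟨hu0, hu1⟩ := u_mem hx
  obtain ⟨h0, h1⟩ := hx
  rw [Fn_eq]
  have hW0 : 0 ≤ (39/4)*(1-x)^3 + (27/4)*(x^2*(1-x)) + (3/2)*x^3 := by
    have : (0:ℝ) ≤ 1 - x := by linarith
    positivity
  have hW : (39/4)*(1-x)^3 + (27/4)*(x^2*(1-x)) + (3/2)*x^3 ≤ 18 := by
    nlinarith [pow_le_one₀ (by linarith : (0:ℝ) ≤ 1-x) (by linarith : (1:ℝ)-x ≤ 1) (n := 3),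
      pow_le_one₀ h0 h1 (n := 3), mul_nonneg (mul_nonneg h0 h0) (by linarith : (0:ℝ) ≤ 1-x),
      sq_nonneg x]
  constructor
  · exact mul_nonneg hW0 (pow_nonneg hu0 n)
  · exact mul_le_mul hW (pow_le_pow_left₀ hu0 hu1 n) (pow_nonneg hu0 n) (by norm_num)

theorem stmt_18 :
    HasSum (fun n : ℕ =>
      (95*((n:ℝ)+1)^2 - 84*((n:ℝ)+1) + 16) * (9/8)^n /
        (((n:ℝ)+1)*(3*((n:ℝ)+1)-1)*(3*((n:ℝ)+1)-2) * (Nat.choose (4*(n+1)) (n+1) : ℝ)))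
      (2*Real.pi/Real.sqrt 3) := by
  have hfun : (fun n : ℕ =>
      (95*((n:ℝ)+1)^2 - 84*((n:ℝ)+1) + 16) * (9/8)^n /
        (((n:ℝ)+1)*(3*((n:ℝ)+1)-1)*(3*((n:ℝ)+1)-2) * (Nat.choose (4*(n+1)) (n+1) : ℝ)))
      = fun n : ℕ => ∫ x in Set.Ioc (0:ℝ) 1, Fn n x := by
    funext n
    rw [term_eq n, intervalIntegral.integral_of_le zero_le_one]
  rw [hfun]
  have hint : ∀ n : ℕ, Integrable (Fn n) (volume.restrict (Set.Ioc (0:ℝ) 1)) :=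
    fun n => (Fn_cont n).integrableOn_Ioc
  have hsum : Summable (fun n : ℕ => ∫ x in Set.Ioc (0:ℝ) 1, ‖Fn n x‖) := by
    apply Summable.of_nonneg_of_le
      (fun n => integral_nonneg (fun x => norm_nonneg _))
      (fun n => ?_)
      ((summable_geometric_of_lt_one (by norm_num) (by norm_num : (9:ℝ)/32 < 1)).mul_left 18)
    rw [← intervalIntegral.integral_of_le zero_le_one]
    calc ∫ x in (0:ℝ)..1, ‖Fn n x‖
        ≤ ‖∫ x in (0:ℝ)..1, ‖Fn n x‖‖ := le_abs_self _
      _ ≤ 18*(9/32)^n * |1 - 0| := by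
          apply intervalIntegral.norm_integral_le_of_norm_le_const
          intro x hx
          rw [Set.uIoc_of_le zero_le_one] at hx
          have hx' : x ∈ Set.Icc (0:ℝ) 1 := ⟨le_of_lt hx.1, hx.2⟩
          have := Fn_bound (n := n) hx'
          rw [norm_norm, Real.norm_of_nonneg this.1]
          exact this.2
      _ = 18*(9/32)^n := by norm_num
  have swap := MeasureTheory.hasSum_integral_of_summable_integral_norm
    (μ := volume.restrict (Set.Ioc (0:ℝ) 1)) (F := Fn) hint hsum
  refine (congrArg (HasSum _) ?_).mpr swap
  rw [show (∫ x in Set.Ioc (0:ℝ) 1, (∑' n, Fn n x))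
      = ∫ x in Set.Ioc (0:ℝ) 1, Rf x from ?_]
  · rw [← intervalIntegral.integral_of_le zero_le_one, Rf_integral]
  · apply setIntegral_congr_fun measurableSet_Ioc
    intro x hx
    exact (sum_Fn ⟨le_of_lt hx.1, hx.2⟩).tsum_eq
end
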